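/- arXiv:2103.05672 — 5 statements merged into one kernel-verified Lean document; each statement's English description precedes it below -/
import Mathlib

section
/- Let ι be a nonempty finite type, f : ι → ℝ, and p : ι → ℝ a probability vector. Then ∑ i, p i * f i + ∑ i, Real.negMulLog (p i) = Real.log (∑ i, Real.exp (f i)) if and only if p i = Real.exp (f i) / ∑ j, Real.exp (f j) for every i. (This is the uniqueness of the entropy-regularized optimizer: the unique policy optimizing the scalarized objective J_λ is the softmax/smooth-Bellman policy σ_λ(α|s) = exp(Q_λ(s,α) − V_λ(s)).) -/
lemma gibbs_aux {p q : ℝ} (hp : 0 ≤ p) (hq : 0 < q) :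
    0 ≤ p * Real.log (p / q) - (p - q) ∧
      (p * Real.log (p / q) - (p - q) = 0 ↔ p = q) := by
  rcases hp.eq_or_lt with h | h
  · subst h
    simp only [zero_div, Real.log_zero, mul_zero, zero_sub, sub_neg_eq_add, zero_add]
    exact ⟨hq.le, by constructor <;> intro h' <;> [exact absurd h' hq.ne'; exact absurd h'.symm hq.ne']⟩
  · have hqp : 0 < q / p := div_pos hq h
    have hle : Real.log (q / p) ≤ q / p - 1 := Real.log_le_sub_one_of_pos hqp
    have hlog : Real.log (q / p) = - Real.log (p / q) := by
      rw [← Real.log_inv, inv_div]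
    have key : p - q ≤ p * Real.log (p / q) := by
      have := mul_le_mul_of_nonneg_left hle h.le
      rw [hlog] at this
      have hid : p * (q / p - 1) = q - p := by field_simp
      nlinarith
    refine ⟨by linarith, ⟨fun heq => ?_, fun heq => by simp [heq, hq.ne']⟩⟩
    by_contra hne
    have hne' : q / p ≠ 1 := by
      intro h1
      exact hne ((div_eq_one_iff_eq h.ne').mp h1).symm
    have hstrict : Real.log (q / p) < q / p - 1 := Real.log_lt_sub_one_of_pos hqp hne'
    have := mul_lt_mul_of_pos_left hstrict h
    rw [hlog] at this
    have hid : p * (q / p - 1) = q - p := by field_simp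
    nlinarith

theorem entropy_regularized_objective_eq_logSumExp_iff_softmax
    {ι : Type*} [Fintype ι] [Nonempty ι] (f p : ι → ℝ)
    (hp : ∀ i, 0 ≤ p i) (hsum : ∑ i, p i = 1) :
    ∑ i, p i * f i + ∑ i, Real.negMulLog (p i) = Real.log (∑ i, Real.exp (f i)) ↔
      ∀ i, p i = Real.exp (f i) / ∑ j, Real.exp (f j) := by
  set Z : ℝ := ∑ j, Real.exp (f j) with hZdef
  have hZ : 0 < Z := Finset.sum_pos (fun i _ => Real.exp_pos _) Finset.univ_nonempty
  set q : ι → ℝ := fun i => Real.exp (f i) / Z with hqdef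
  have hq : ∀ i, 0 < q i := fun i => div_pos (Real.exp_pos _) hZ
  have hqsum : ∑ i, q i = 1 := by
    rw [hqdef]
    simp only
    rw [← Finset.sum_div, ← hZdef, div_self hZ.ne']
  have hlogq : ∀ i, Real.log (q i) = f i - Real.log Z := by
    intro i
    rw [hqdef]
    simp only
    rw [Real.log_div (Real.exp_pos _).ne' hZ.ne', Real.log_exp]
  -- the gap term
  set g : ι → ℝ := fun i => p i * Real.log (p i / q i) - (p i - q i) with hgdef
  have hg0 : ∀ i, 0 ≤ g i := fun i => (gibbs_aux (hp i) (hq i)).1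
  have hgiff : ∀ i, g i = 0 ↔ p i = q i := fun i => (gibbs_aux (hp i) (hq i)).2
  have hterm : ∀ i, p i * Real.log (p i / q i)
      = p i * Real.log (p i) - p i * f i + p i * Real.log Z := by
    intro i
    rcases (hp i).eq_or_lt with h | h
    · simp [← h]
    · rw [Real.log_div h.ne' (hq i).ne', hlogq i]
      ring
  have hnml : ∑ i, Real.negMulLog (p i) = - ∑ i, p i * Real.log (p i) := by
    simp [Real.negMulLog, neg_mul, Finset.sum_neg_distrib]
  have hsumg : ∑ i, g i = Real.log Z - (∑ i, p i * f i + ∑ i, Real.negMulLog (p i)) := by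
    have : ∑ i, g i = ∑ i, p i * Real.log (p i / q i) - (∑ i, p i - ∑ i, q i) := by
      rw [hgdef, Finset.sum_sub_distrib, Finset.sum_sub_distrib]
    rw [this, hsum, hqsum, Finset.sum_congr rfl (fun i _ => hterm i), hnml,
      Finset.sum_add_distrib, Finset.sum_sub_distrib, ← Finset.sum_mul, hsum]
    ring
  constructor
  · intro h i
    have hzero : ∑ i, g i = 0 := by rw [hsumg, h]; ring
    have := (Finset.sum_eq_zero_iff_of_nonneg (fun i _ => hg0 i)).mp hzero i (Finset.mem_univ i)
    exact (hgiff i).mp this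
  · intro h
    have hzero : ∑ i, g i = 0 :=
      Finset.sum_eq_zero fun i _ => (hgiff i).mpr (h i)
    rw [hsumg] at hzero
    linarith
end

section
/- Let ι be a nonempty finite type and f : ι → ℝ. The softmax mean λ ↦ ∑ i, (Real.exp (λ * f i) / ∑ j, Real.exp (λ * f j)) * f i is monotone nondecreasing on ℝ, and it is strictly increasing if f is nonconstant (there exist i, j with f i ≠ f j). (This is the single-step form of the paper's Proposition that the performance p_λ of the rationality-λ policy is continuously and strictly increasing in λ.) -/
/-!
Writing `p_λ` for the softmax distribution, the derivative of the softmax mean `m(λ) = ∑ p_λ i * f i`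
is the softmax variance `∑ p_λ i * (f i - m(λ))²`: differentiate `m = S / T` with
`T = ∑ exp (λ f i)`, `S = ∑ exp (λ f i) f i`, and note `S' / T = ∑ p_λ f²`. The variance is
nonnegative, and positive when `f` is nonconstant, since then some `f k` differs from `m(λ)`
while every `p_λ k` is positive.
-/

open Real Finset

theorem sum_mul_sub_sq_eq_of_sum_eq_one {ι : Type*} (s : Finset ι) {p : ι → ℝ}
    (hp : ∑ i ∈ s, p i = 1) (f : ι → ℝ) :
    ∑ i ∈ s, p i * (f i - ∑ j ∈ s, p j * f j) ^ 2
      = ∑ i ∈ s, p i * f i ^ 2 - (∑ i ∈ s, p i * f i) ^ 2 := by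
  set m := ∑ j ∈ s, p j * f j
  calc ∑ i ∈ s, p i * (f i - m) ^ 2
      = ∑ i ∈ s, p i * f i ^ 2 - 2 * m * ∑ i ∈ s, p i * f i + m ^ 2 * ∑ i ∈ s, p i := by
        simp only [mul_sum, ← sum_sub_distrib, ← sum_add_distrib]
        exact sum_congr rfl fun i _ => by ring
    _ = ∑ i ∈ s, p i * f i ^ 2 - m ^ 2 := by rw [hp]; ring

theorem hasDerivAt_sum_exp_mul {ι : Type*} (s : Finset ι) (f g : ι → ℝ) (l : ℝ) :
    HasDerivAt (fun t => ∑ i ∈ s, exp (t * f i) * g i) (∑ i ∈ s, exp (l * f i) * f i * g i) l :=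
  HasDerivAt.fun_sum fun i _ => by
    simpa using (((hasDerivAt_id l).mul_const (f i)).exp).mul_const (g i)

namespace Softmax

variable {ι : Type*} [Fintype ι]

noncomputable def softmax (l : ℝ) (f : ι → ℝ) (i : ι) : ℝ :=
  exp (l * f i) / ∑ j, exp (l * f j)

noncomputable def mean (f : ι → ℝ) (l : ℝ) : ℝ :=
  ∑ i, softmax l f i * f i

noncomputable def variance (f : ι → ℝ) (l : ℝ) : ℝ :=
  ∑ i, softmax l f i * (f i - mean f l) ^ 2

theorem sum_exp_mul_pos [Nonempty ι] (l : ℝ) (f : ι → ℝ) : 0 < ∑ i, exp (l * f i) :=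
  sum_pos (fun _ _ => exp_pos _) univ_nonempty

theorem softmax_pos [Nonempty ι] (l : ℝ) (f : ι → ℝ) (i : ι) : 0 < softmax l f i :=
  div_pos (exp_pos _) (sum_exp_mul_pos l f)

theorem sum_softmax [Nonempty ι] (l : ℝ) (f : ι → ℝ) : ∑ i, softmax l f i = 1 := by
  simp only [softmax, ← sum_div]
  exact div_self (sum_exp_mul_pos l f).ne'

theorem mean_eq_div (f : ι → ℝ) (l : ℝ) :
    mean f l = (∑ i, exp (l * f i) * f i) / ∑ i, exp (l * f i) := by
  simp only [mean, softmax, div_mul_eq_mul_div, sum_div]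

theorem variance_eq [Nonempty ι] (f : ι → ℝ) (l : ℝ) :
    variance f l = ∑ i, softmax l f i * f i ^ 2 - mean f l ^ 2 :=
  sum_mul_sub_sq_eq_of_sum_eq_one univ (sum_softmax l f) f

theorem hasDerivAt_mean [Nonempty ι] (f : ι → ℝ) (l : ℝ) :
    HasDerivAt (mean f) (variance f l) l := by
  have hS := hasDerivAt_sum_exp_mul univ f f l
  have hT := hasDerivAt_sum_exp_mul univ f 1 l
  simp only [Pi.one_apply, mul_one] at hT
  rw [show mean f = _ from funext (mean_eq_div f)]
  refine (hS.fun_div hT (sum_exp_mul_pos l f).ne').congr_deriv ?_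
  rw [variance_eq, mean_eq_div]
  simp only [softmax, div_mul_eq_mul_div, ← sum_div]
  field_simp

theorem variance_nonneg (f : ι → ℝ) (l : ℝ) : 0 ≤ variance f l := by
  unfold variance softmax
  positivity

theorem variance_pos [Nonempty ι] {f : ι → ℝ} (hf : ∃ i j, f i ≠ f j) (l : ℝ) :
    0 < variance f l := by
  obtain ⟨i, j, hij⟩ := hf
  obtain ⟨k, hk⟩ : ∃ k, f k ≠ mean f l := by
    by_contra! h
    exact hij ((h i).trans (h j).symm)
  refine sum_pos' (fun i _ => ?_) ⟨k, mem_univ k, ?_⟩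
  · exact mul_nonneg (softmax_pos l f i).le (sq_nonneg _)
  · exact mul_pos (softmax_pos l f k) (sq_pos_of_ne_zero (sub_ne_zero.mpr hk))

theorem monotone_mean [Nonempty ι] (f : ι → ℝ) : Monotone (mean f) :=
  monotone_of_deriv_nonneg (fun l => (hasDerivAt_mean f l).differentiableAt)
    fun l => (hasDerivAt_mean f l).deriv ▸ variance_nonneg f l

theorem strictMono_mean [Nonempty ι] {f : ι → ℝ} (hf : ∃ i j, f i ≠ f j) :
    StrictMono (mean f) :=
  strictMono_of_deriv_pos fun l => (hasDerivAt_mean f l).deriv ▸ variance_pos hf l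

end Softmax

theorem softmax_mean_monotone_and_strictMono
    {ι : Type*} [Fintype ι] [Nonempty ι] (f : ι → ℝ) :
    Monotone (fun l : ℝ => ∑ i, (Real.exp (l * f i) / ∑ j, Real.exp (l * f j)) * f i) ∧
      ((∃ i j, f i ≠ f j) →
        StrictMono (fun l : ℝ => ∑ i, (Real.exp (l * f i) / ∑ j, Real.exp (l * f j)) * f i)) :=
  ⟨Softmax.monotone_mean f, Softmax.strictMono_mean⟩
end

section
/- Let ι be a nonempty finite type and f : ι → ℝ. Writing p_λ for the softmax distribution softmax λ f, its Shannon entropy satisfies ∑ i, Real.negMulLog (p_λ i) = Real.log (∑ i, Real.exp (λ * f i)) − λ * ∑ i, p_λ i * f i; moreover λ ↦ ∑ i, Real.negMulLog (p_λ i) is antitone on [0, ∞), and strictly decreasing on [0, ∞) if f is nonconstant (there exist i, j with f i ≠ f j). (This is the single-step form of the paper's Proposition that the causal entropy h_λ of the rationality-λ policy is strictly decreasing in λ.) -/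
open Real Finset

section aux
variable {ι : Type*} [Fintype ι] [Nonempty ι]

lemma sm_sum_pos (f : ι → ℝ) (l : ℝ) : 0 < ∑ j, Real.exp (l * f j) :=
  Finset.sum_pos (fun j _ => Real.exp_pos _) Finset.univ_nonempty

lemma sm_sum_one (f : ι → ℝ) (l : ℝ) :
    ∑ i, Real.exp (l * f i) / ∑ j, Real.exp (l * f j) = 1 := by
  rw [← Finset.sum_div, div_self (sm_sum_pos f l).ne']

lemma sm_pos (f : ι → ℝ) (l : ℝ) (i : ι) :
    0 < Real.exp (l * f i) / ∑ j, Real.exp (l * f j) :=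
  div_pos (Real.exp_pos _) (sm_sum_pos f l)

/-- Gibbs inequality, non-strict. -/
lemma gibbs_le (p q : ι → ℝ) (hp : ∀ i, 0 < p i) (hq : ∀ i, 0 < q i)
    (hp1 : ∑ i, p i = 1) (hq1 : ∑ i, q i = 1) :
    ∑ i, Real.negMulLog (p i) ≤ -∑ i, p i * Real.log (q i) := by
  have key : ∑ i, p i * Real.log (q i / p i) ≤ 0 := by
    calc ∑ i, p i * Real.log (q i / p i)
        ≤ ∑ i, p i * (q i / p i - 1) :=
          Finset.sum_le_sum fun i _ => mul_le_mul_of_nonneg_left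
            (Real.log_le_sub_one_of_pos (div_pos (hq i) (hp i))) (hp i).le
      _ = ∑ i, (q i - p i) := Finset.sum_congr rfl fun i _ => by
          rw [mul_sub, mul_div_cancel₀ _ (hp i).ne', mul_one]
      _ = 0 := by rw [Finset.sum_sub_distrib, hp1, hq1, sub_self]
  have heq : ∑ i, p i * Real.log (q i / p i) =
      ∑ i, p i * Real.log (q i) + ∑ i, Real.negMulLog (p i) := by
    rw [← Finset.sum_add_distrib]
    refine Finset.sum_congr rfl fun i _ => ?_
    rw [Real.log_div (hq i).ne' (hp i).ne', Real.negMulLog]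
    ring
  linarith [heq ▸ key]

/-- Gibbs inequality, strict. -/
lemma gibbs_lt (p q : ι → ℝ) (hp : ∀ i, 0 < p i) (hq : ∀ i, 0 < q i)
    (hp1 : ∑ i, p i = 1) (hq1 : ∑ i, q i = 1) (hne : ∃ i, p i ≠ q i) :
    ∑ i, Real.negMulLog (p i) < -∑ i, p i * Real.log (q i) := by
  obtain ⟨i0, hi0⟩ := hne
  have key : ∑ i, p i * Real.log (q i / p i) < 0 := by
    have hlt : ∑ i, p i * Real.log (q i / p i) < ∑ i, p i * (q i / p i - 1) := by
      refine Finset.sum_lt_sum (fun i _ => mul_le_mul_of_nonneg_left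
        (Real.log_le_sub_one_of_pos (div_pos (hq i) (hp i))) (hp i).le) ⟨i0, Finset.mem_univ _, ?_⟩
      refine mul_lt_mul_of_pos_left (Real.log_lt_sub_one_of_pos (div_pos (hq i0) (hp i0)) ?_)
        (hp i0)
      rw [ne_eq, div_eq_one_iff_eq (hp i0).ne']
      exact fun h => hi0 h.symm
    have heq2 : ∑ i, p i * (q i / p i - 1) = 0 := by
      have : ∑ i, p i * (q i / p i - 1) = ∑ i, (q i - p i) := Finset.sum_congr rfl fun i _ => by
        rw [mul_sub, mul_div_cancel₀ _ (hp i).ne', mul_one]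
      rw [this, Finset.sum_sub_distrib, hp1, hq1, sub_self]
    linarith
  have heq : ∑ i, p i * Real.log (q i / p i) =
      ∑ i, p i * Real.log (q i) + ∑ i, Real.negMulLog (p i) := by
    rw [← Finset.sum_add_distrib]
    refine Finset.sum_congr rfl fun i _ => ?_
    rw [Real.log_div (hq i).ne' (hp i).ne', Real.negMulLog]
    ring
  linarith [heq ▸ key]

/-- The softmax mean of `f` is monotone in the temperature. -/
lemma sm_mean_mono (f : ι → ℝ) {a b : ℝ} (hab : a ≤ b) :
    ∑ i, (Real.exp (a * f i) / ∑ j, Real.exp (a * f j)) * f i ≤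
      ∑ i, (Real.exp (b * f i) / ∑ j, Real.exp (b * f j)) * f i := by
  set A : ι → ℝ := fun i => Real.exp (a * f i) with hA
  set B : ι → ℝ := fun i => Real.exp (b * f i) with hB
  have hZa : 0 < ∑ j, A j := sm_sum_pos f a
  have hZb : 0 < ∑ j, B j := sm_sum_pos f b
  have e1 : ∑ i, (A i / ∑ j, A j) * f i = (∑ i, A i * f i) / ∑ j, A j := by
    rw [Finset.sum_div]
    exact Finset.sum_congr rfl fun i _ => by ring
  have e2 : ∑ i, (B i / ∑ j, B j) * f i = (∑ i, B i * f i) / ∑ j, B j := by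
    rw [Finset.sum_div]
    exact Finset.sum_congr rfl fun i _ => by ring
  rw [e1, e2, div_le_div_iff₀ hZa hZb]
  have key : ∀ i j, 0 ≤ (B i * A j - A i * B j) * (f i - f j) := by
    intro i j
    rcases le_total (f j) (f i) with h | h
    · refine mul_nonneg ?_ (by linarith)
      rw [sub_nonneg, hA, hB, ← Real.exp_add, ← Real.exp_add]
      exact Real.exp_le_exp.2 (by nlinarith)
    · have hx : B i * A j - A i * B j ≤ 0 := by
        rw [sub_nonpos, hA, hB, ← Real.exp_add, ← Real.exp_add]
        exact Real.exp_le_exp.2 (by nlinarith)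
      nlinarith
  have hS : 0 ≤ ∑ i, ∑ j, (B i * A j - A i * B j) * f i := by
    have h2 : (2:ℝ) * ∑ i, ∑ j, (B i * A j - A i * B j) * f i
        = ∑ i, ∑ j, (B i * A j - A i * B j) * (f i - f j) := by
      rw [two_mul]
      nth_rewrite 2 [Finset.sum_comm]
      rw [← Finset.sum_add_distrib]
      refine Finset.sum_congr rfl fun i _ => ?_
      rw [← Finset.sum_add_distrib]
      exact Finset.sum_congr rfl fun j _ => by ring
    have : 0 ≤ ∑ i, ∑ j, (B i * A j - A i * B j) * (f i - f j) :=
      Finset.sum_nonneg fun i _ => Finset.sum_nonneg fun j _ => key i j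
    linarith
  have expand : (∑ i, B i * f i) * (∑ j, A j) - (∑ i, A i * f i) * (∑ j, B j)
      = ∑ i, ∑ j, (B i * A j - A i * B j) * f i := by
    rw [Finset.sum_mul_sum, Finset.sum_mul_sum]
    rw [← Finset.sum_sub_distrib]
    refine Finset.sum_congr rfl fun i _ => ?_
    rw [← Finset.sum_sub_distrib]
    exact Finset.sum_congr rfl fun j _ => by ring
  linarith [expand ▸ hS]

/-- The entropy formula. -/
lemma sm_entropy_formula (f : ι → ℝ) (l : ℝ) :
    ∑ i, Real.negMulLog (Real.exp (l * f i) / ∑ j, Real.exp (l * f j)) =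
      Real.log (∑ i, Real.exp (l * f i)) -
        l * ∑ i, (Real.exp (l * f i) / ∑ j, Real.exp (l * f j)) * f i := by
  have hZ := sm_sum_pos f l
  have h1 := sm_sum_one f l
  have hterm : ∀ i, Real.negMulLog (Real.exp (l * f i) / ∑ j, Real.exp (l * f j)) =
      (Real.exp (l * f i) / ∑ j, Real.exp (l * f j)) * Real.log (∑ j, Real.exp (l * f j))
      - l * ((Real.exp (l * f i) / ∑ j, Real.exp (l * f j)) * f i) := by
    intro i
    rw [Real.negMulLog, Real.log_div (Real.exp_pos _).ne' hZ.ne', Real.log_exp]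
    ring
  rw [Finset.sum_congr rfl fun i _ => hterm i, Finset.sum_sub_distrib,
    ← Finset.sum_mul, h1, one_mul, ← Finset.mul_sum]

/-- Main inequality, non-strict. -/
lemma sm_entropy_le (f : ι → ℝ) {a b : ℝ} (ha : 0 ≤ a) (hab : a ≤ b) :
    ∑ i, Real.negMulLog (Real.exp (b * f i) / ∑ j, Real.exp (b * f j)) ≤
      ∑ i, Real.negMulLog (Real.exp (a * f i) / ∑ j, Real.exp (a * f j)) := by
  have hZa := sm_sum_pos f a
  have gibbs := gibbs_le (fun i => Real.exp (b * f i) / ∑ j, Real.exp (b * f j))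
    (fun i => Real.exp (a * f i) / ∑ j, Real.exp (a * f j))
    (sm_pos f b) (sm_pos f a) (sm_sum_one f b) (sm_sum_one f a)
  have cross : -∑ i, (Real.exp (b * f i) / ∑ j, Real.exp (b * f j)) *
      Real.log (Real.exp (a * f i) / ∑ j, Real.exp (a * f j))
      = Real.log (∑ j, Real.exp (a * f j)) -
        a * ∑ i, (Real.exp (b * f i) / ∑ j, Real.exp (b * f j)) * f i := by
    have hterm : ∀ i, (Real.exp (b * f i) / ∑ j, Real.exp (b * f j)) *
        Real.log (Real.exp (a * f i) / ∑ j, Real.exp (a * f j))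
        = a * ((Real.exp (b * f i) / ∑ j, Real.exp (b * f j)) * f i)
          - (Real.exp (b * f i) / ∑ j, Real.exp (b * f j)) *
            Real.log (∑ j, Real.exp (a * f j)) := by
      intro i
      rw [Real.log_div (Real.exp_pos _).ne' hZa.ne', Real.log_exp]
      ring
    rw [Finset.sum_congr rfl fun i _ => hterm i, Finset.sum_sub_distrib,
      ← Finset.mul_sum, ← Finset.sum_mul, sm_sum_one f b, one_mul]
    ring
  have mono := mul_le_mul_of_nonneg_left (sm_mean_mono f hab) ha
  have hfa := sm_entropy_formula f a
  linarith [gibbs, cross ▸ gibbs]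

/-- Main inequality, strict. -/
lemma sm_entropy_lt (f : ι → ℝ) (hnc : ∃ i j, f i ≠ f j) {a b : ℝ} (ha : 0 ≤ a) (hab : a < b) :
    ∑ i, Real.negMulLog (Real.exp (b * f i) / ∑ j, Real.exp (b * f j)) <
      ∑ i, Real.negMulLog (Real.exp (a * f i) / ∑ j, Real.exp (a * f j)) := by
  have hZa := sm_sum_pos f a
  have hZb := sm_sum_pos f b
  -- the two softmax distributions differ
  have hne : ∃ i, Real.exp (b * f i) / ∑ j, Real.exp (b * f j) ≠
      Real.exp (a * f i) / ∑ j, Real.exp (a * f j) := by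
    by_contra hc
    push_neg at hc
    obtain ⟨i0, j0, hij⟩ := hnc
    have h1 : Real.exp (b * f i0) * (∑ j, Real.exp (a * f j))
        = Real.exp (a * f i0) * (∑ j, Real.exp (b * f j)) :=
      (div_eq_div_iff hZb.ne' hZa.ne').1 (hc i0)
    have h2 : Real.exp (b * f j0) * (∑ j, Real.exp (a * f j))
        = Real.exp (a * f j0) * (∑ j, Real.exp (b * f j)) :=
      (div_eq_div_iff hZb.ne' hZa.ne').1 (hc j0)
    have h3 : Real.exp (b * f i0) * Real.exp (a * f j0) *
        ((∑ j, Real.exp (a * f j)) * (∑ j, Real.exp (b * f j)))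
        = Real.exp (a * f i0) * Real.exp (b * f j0) *
        ((∑ j, Real.exp (a * f j)) * (∑ j, Real.exp (b * f j))) := by
      linear_combination (Real.exp (a * f j0) * (∑ j, Real.exp (b * f j))) * h1 -
        (Real.exp (a * f i0) * (∑ j, Real.exp (b * f j))) * h2
    have h4 := mul_right_cancel₀ (mul_pos hZa hZb).ne' h3
    rw [← Real.exp_add, ← Real.exp_add, Real.exp_eq_exp] at h4
    have h5 : (b - a) * (f i0 - f j0) = 0 := by linear_combination h4
    rcases mul_eq_zero.1 h5 with h | h
    · exact hab.ne' (by linarith)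
    · exact hij (by linarith)
  have gibbs := gibbs_lt (fun i => Real.exp (b * f i) / ∑ j, Real.exp (b * f j))
    (fun i => Real.exp (a * f i) / ∑ j, Real.exp (a * f j))
    (sm_pos f b) (sm_pos f a) (sm_sum_one f b) (sm_sum_one f a) hne
  have cross : -∑ i, (Real.exp (b * f i) / ∑ j, Real.exp (b * f j)) *
      Real.log (Real.exp (a * f i) / ∑ j, Real.exp (a * f j))
      = Real.log (∑ j, Real.exp (a * f j)) -
        a * ∑ i, (Real.exp (b * f i) / ∑ j, Real.exp (b * f j)) * f i := by
    have hterm : ∀ i, (Real.exp (b * f i) / ∑ j, Real.exp (b * f j)) *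
        Real.log (Real.exp (a * f i) / ∑ j, Real.exp (a * f j))
        = a * ((Real.exp (b * f i) / ∑ j, Real.exp (b * f j)) * f i)
          - (Real.exp (b * f i) / ∑ j, Real.exp (b * f j)) *
            Real.log (∑ j, Real.exp (a * f j)) := by
      intro i
      rw [Real.log_div (Real.exp_pos _).ne' hZa.ne', Real.log_exp]
      ring
    rw [Finset.sum_congr rfl fun i _ => hterm i, Finset.sum_sub_distrib,
      ← Finset.mul_sum, ← Finset.sum_mul, sm_sum_one f b, one_mul]
    ring
  have mono := mul_le_mul_of_nonneg_left (sm_mean_mono f hab.le) ha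
  have hfa := sm_entropy_formula f a
  linarith [gibbs, cross ▸ gibbs]

end aux

theorem softmax_entropy_eq_and_antitone
    {ι : Type*} [Fintype ι] [Nonempty ι] (f : ι → ℝ) :
    (∀ l : ℝ,
        ∑ i, Real.negMulLog (Real.exp (l * f i) / ∑ j, Real.exp (l * f j)) =
          Real.log (∑ i, Real.exp (l * f i)) -
            l * ∑ i, (Real.exp (l * f i) / ∑ j, Real.exp (l * f j)) * f i) ∧
      AntitoneOn
        (fun l : ℝ => ∑ i, Real.negMulLog (Real.exp (l * f i) / ∑ j, Real.exp (l * f j)))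
        (Set.Ici 0) ∧
      ((∃ i j, f i ≠ f j) →
        StrictAntiOn
          (fun l : ℝ => ∑ i, Real.negMulLog (Real.exp (l * f i) / ∑ j, Real.exp (l * f j)))
          (Set.Ici 0)) := by
  refine ⟨fun l => sm_entropy_formula f l, ?_, ?_⟩
  · intro a ha b _ hab
    exact sm_entropy_le f ha hab
  · intro hnc a ha b _ hab
    exact sm_entropy_lt f hnc ha hab
end

section
/- Let ι be a nonempty finite type, f : ι → ℝ, and let M = {i : ι | f i = (maximum value of f over ι)}. As λ → ∞ (Filter.atTop), the softmax probability softmax λ f i = Real.exp (λ * f i) / ∑ j, Real.exp (λ * f j) tends to 1 / (cardinality of M) if i ∈ M, and tends to 0 if i ∉ M. (This makes precise the paper's claim that as λ → ∞ the policy σ_λ selects uniformly from the actions that maximize performance.) -/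
/-! Shifting every exponent by the maximum `F` of `f` does not change the softmax, and after the
shift `exp (λ * (f j - F))` tends to `1` on the maximizers and to `0` elsewhere. Hence the
denominator tends to `#M` and the numerator of the `i`-th weight to `1` or `0`. -/

open Filter Topology Finset Real

theorem tendsto_exp_mul_atTop_nhds_zero_of_neg {x : ℝ} (hx : x < 0) :
    Tendsto (fun l : ℝ => exp (l * x)) atTop (𝓝 0) :=
  tendsto_exp_atBot.comp (tendsto_id.atTop_mul_const_of_neg hx)

theorem tendsto_exp_mul_sub_of_le {a F : ℝ} (ha : a ≤ F) :
    Tendsto (fun l : ℝ => exp (l * (a - F))) atTop (𝓝 (if a = F then 1 else 0)) := by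
  split_ifs with h
  · simp [h]
  · exact tendsto_exp_mul_atTop_nhds_zero_of_neg (sub_neg.mpr (lt_of_le_of_ne ha h))

theorem exp_mul_div_sum_exp_mul_eq_sub {ι : Type*} (s : Finset ι) (f : ι → ℝ) (c l : ℝ) (i : ι) :
    exp (l * f i) / ∑ j ∈ s, exp (l * f j)
      = exp (l * (f i - c)) / ∑ j ∈ s, exp (l * (f j - c)) := by
  have hshift : ∀ j, exp (l * f j) = exp (l * (f j - c)) * exp (l * c) := fun j => by
    rw [← exp_add]; ring_nf
  simp only [hshift, ← sum_mul]
  exact mul_div_mul_right _ _ (exp_ne_zero _)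

theorem tendsto_sum_exp_mul_sub_of_le {ι : Type*} [Fintype ι] {f : ι → ℝ} {F : ℝ}
    (hle : ∀ j, f j ≤ F) :
    Tendsto (fun l : ℝ => ∑ j, exp (l * (f j - F))) atTop (𝓝 (#{j | f j = F} : ℝ)) := by
  convert tendsto_finsetSum univ (fun j _ => tendsto_exp_mul_sub_of_le (hle j)) using 2
  rw [sum_boole]

theorem tendsto_softmax_atTop_of_isGreatest {ι : Type*} [Fintype ι] {f : ι → ℝ} {F : ℝ}
    (hF : IsGreatest (Set.range f) F) (i : ι) :
    Tendsto (fun l : ℝ => exp (l * f i) / ∑ j, exp (l * f j)) atTop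
      (𝓝 ((if f i = F then 1 else 0) / #{j | f j = F})) := by
  have hcard : (#{j | f j = F} : ℝ) ≠ 0 := by
    obtain ⟨j, hj⟩ := hF.1
    exact_mod_cast (card_pos.mpr ⟨j, by simpa using hj⟩).ne'
  simp only [exp_mul_div_sum_exp_mul_eq_sub univ f F]
  have hle : ∀ j, f j ≤ F := fun j => hF.2 (Set.mem_range_self j)
  exact (tendsto_exp_mul_sub_of_le (hle i)).div (tendsto_sum_exp_mul_sub_of_le hle) hcard

theorem softmax_tendsto_uniform_on_argmax
    {ι : Type*} [Fintype ι] [Nonempty ι] (f : ι → ℝ)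
    (M : Finset ι)
    (hM : M = Finset.univ.filter (fun k => f k = Finset.univ.sup' Finset.univ_nonempty f))
    (i : ι) :
    (i ∈ M →
      Filter.Tendsto (fun l : ℝ => Real.exp (l * f i) / ∑ j, Real.exp (l * f j))
        Filter.atTop (nhds (1 / M.card))) ∧
    (i ∉ M →
      Filter.Tendsto (fun l : ℝ => Real.exp (l * f i) / ∑ j, Real.exp (l * f j))
        Filter.atTop (nhds 0)) := by
  obtain ⟨k, -, hk⟩ := exists_mem_eq_sup' (univ_nonempty (α := ι)) f
  have hmax : IsGreatest (Set.range f) (univ.sup' univ_nonempty f) :=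
    ⟨⟨k, hk.symm⟩, Set.forall_mem_range.2 fun j => le_sup' f (mem_univ j)⟩
  have hlim := tendsto_softmax_atTop_of_isGreatest hmax i
  have hmem : i ∈ M ↔ f i = univ.sup' univ_nonempty f := by simp [hM]
  rw [← hM] at hlim
  exact ⟨fun hi => by simpa [hmem.mp hi] using hlim, fun hi => by simpa [mt hmem.mpr hi] using hlim⟩
end

section
/- Let ι be a nonempty finite type, f : ι → ℝ, and let M = {i : ι | f i = (maximum value of f over ι)}. As λ → ∞ (Filter.atTop), the Shannon entropy of the softmax distribution, ∑ i, Real.negMulLog (Real.exp (λ * f i) / ∑ j, Real.exp (λ * f j)), tends to Real.log (cardinality of M). (This identifies the minimal-entropy endpoint h_∞ used in the paper's reparameterization and entropy-matching construction.) -/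
open scoped Classical

open Filter Topology Finset Real

/-!
As `l → ∞`, subtracting the maximum `m` of `f` from every exponent leaves the softmax unchanged and
makes `exp (l * (f j - m))` tend to `1` on maximizers and to `0` elsewhere, so the softmax tends to
the uniform distribution on the maximizers. Entropy is continuous, and that of the uniform
distribution on `M` is `log #M`.
-/

noncomputable def softmax {ι : Type*} [Fintype ι] (l : ℝ) (f : ι → ℝ) (i : ι) : ℝ :=
  exp (l * f i) / ∑ j, exp (l * f j)

section

variable {ι : Type*} [Fintype ι]

lemma softmax_sub_const (l c : ℝ) (f : ι → ℝ) :
    softmax l (fun j => f j - c) = softmax l f := by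
  have hexp : ∀ j, exp (l * (f j - c)) = exp (l * f j) * exp (-(l * c)) := fun j => by
    rw [← exp_add]; ring_nf
  ext i
  simp only [softmax, hexp, ← sum_mul]
  exact mul_div_mul_right _ _ (exp_ne_zero _)

lemma tendsto_exp_mul_sub_atTop {a b : ℝ} (hab : a ≤ b) :
    Tendsto (fun l => exp (l * (a - b))) atTop (𝓝 (if a = b then 1 else 0)) := by
  split_ifs with h
  · simp [h]
  · have hneg : a - b < 0 := sub_neg.mpr (lt_of_le_of_ne hab h)
    exact tendsto_exp_atBot.comp (tendsto_id.atTop_mul_const_of_neg hneg)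

lemma tendsto_softmax_atTop {f : ι → ℝ} {m : ℝ} (hle : ∀ j, f j ≤ m)
    (hmax : ∃ j, f j = m) (i : ι) :
    Tendsto (fun l => softmax l f i) atTop
      (𝓝 (if i ∈ ({j | f j = m} : Finset ι) then ((#{j | f j = m} : ℕ) : ℝ)⁻¹ else 0)) := by
  have hcard : ((#{j | f j = m} : ℕ) : ℝ) ≠ 0 := by
    obtain ⟨j, hj⟩ := hmax
    exact Nat.cast_ne_zero.mpr (card_ne_zero.mpr ⟨j, by simpa using hj⟩)
  have hnum := tendsto_exp_mul_sub_atTop (hle i)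
  have hden : Tendsto (fun l => ∑ j, exp (l * (f j - m))) atTop
      (𝓝 ((#{j | f j = m} : ℕ) : ℝ)) := by
    rw [← sum_boole]
    exact tendsto_finsetSum _ fun j _ => tendsto_exp_mul_sub_atTop (hle j)
  have hshift : (fun l => softmax l f i) = fun l => softmax l (fun j => f j - m) i := by
    simp only [softmax_sub_const]
  have hlim : (if f i = m then 1 else 0) / ((#{j | f j = m} : ℕ) : ℝ)
      = if i ∈ ({j | f j = m} : Finset ι) then ((#{j | f j = m} : ℕ) : ℝ)⁻¹ else 0 := by
    split_ifs <;> simp_all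
  rw [hshift, ← hlim]
  exact hnum.div hden hcard

lemma sum_negMulLog_uniform (s : Finset ι) :
    ∑ i, negMulLog (if i ∈ s then ((#s : ℕ) : ℝ)⁻¹ else 0) = log #s := by
  simp only [apply_ite negMulLog, negMulLog_zero, sum_ite_mem, univ_inter, sum_const,
    nsmul_eq_mul]
  rcases eq_or_ne ((#s : ℕ) : ℝ) 0 with h | h
  · simp [h]
  · rw [negMulLog, log_inv]
    field_simp

end

theorem softmax_entropy_tendsto_log_card_argmax
    {ι : Type*} [Fintype ι] [Nonempty ι] (f : ι → ℝ)
    (M : Finset ι)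
    (hM : M = Finset.univ.filter (fun k => f k = Finset.univ.sup' Finset.univ_nonempty f)) :
    Filter.Tendsto
      (fun l : ℝ => ∑ i, Real.negMulLog (Real.exp (l * f i) / ∑ j, Real.exp (l * f j)))
      Filter.atTop (nhds (Real.log M.card)) := by
  subst hM
  have hle : ∀ j, f j ≤ univ.sup' univ_nonempty f := fun j => le_sup' f (mem_univ j)
  obtain ⟨j, -, hj⟩ := exists_mem_eq_sup' univ_nonempty f
  have hsoftmax := fun i => tendsto_softmax_atTop hle ⟨j, hj.symm⟩ i
  have hentropy := tendsto_finsetSum univ fun i _ =>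
    (continuous_negMulLog.tendsto _).comp (hsoftmax i)
  rwa [sum_negMulLog_uniform] at hentropy
end
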